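/- Let L be a Lie algebra over R_k (free as a module) with residue-field reduction L̄. The cohomology class [J] ∈ H³(L̄, ad) of the Jacobiator of any bracket algebra lift of L over R_{k+1} is independent of the choice of bracket algebra lift. -/

import Mathlib

/-!
Two lifts reduce to the same bracket on `L`, so their difference `D = [·,·]₂ - [·,·]₁` takes
values in `π^k B ≅ L̄`; since `π · π^k B = 0`, `D` only depends on its arguments modulo `π`,
so it is an alternating 2-form on `L̄`. Expanding `[·,·]₂ = [·,·]₁ + D` in the Jacobiator, the
term quadratic in `D` lies in `π^{2k} B = 0`, and the linear terms form the
Chevalley–Eilenberg coboundary of `D`.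
-/

open Pointwise

/-- `Rmod R π m` is the quotient ring `R/π^m R`. -/
abbrev Rmod (R : Type) [CommRing R] (π : R) (m : ℕ) : Type :=
  R ⧸ Ideal.span {π ^ m}

section Setup

variable (R : Type) [CommRing R] (π : R) (k : ℕ)
variable (B : Type) [AddCommGroup B] [Module (Rmod R π (k + 1)) B]

/-- The image of `π` in `R_{k+1}`. -/
noncomputable abbrev pbar : Rmod R π (k + 1) := Ideal.Quotient.mk _ π

/-- The submodule `π^k B` of `B`. -/
noncomputable abbrev pikB : Submodule (Rmod R π (k + 1)) B :=
  (pbar R π k) ^ k • (⊤ : Submodule (Rmod R π (k + 1)) B)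

/-- The submodule `π B` of `B`. -/
noncomputable abbrev piB : Submodule (Rmod R π (k + 1)) B :=
  (pbar R π k) • (⊤ : Submodule (Rmod R π (k + 1)) B)

/-- `L = B/π^k B`, the reduction of `B` to a module over `R_k`. -/
noncomputable abbrev Lred := B ⧸ pikB R π k B

/-- `L̄ = B/πB`, the reduction of `B` to a vector space over the residue field. -/
noncomputable abbrev Lbar := B ⧸ piB R π k B

/-- The reduction map `mod : B → L = B/π^k B`. -/
noncomputable abbrev modk : B →ₗ[Rmod R π (k + 1)] Lred R π k B :=
  (pikB R π k B).mkQ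

/-- The reduction map `λ : B → L̄ = B/πB`. -/
noncomputable abbrev lam : B →ₗ[Rmod R π (k + 1)] Lbar R π k B :=
  (piB R π k B).mkQ

/-- `ψ : L̄ → B`, the map sending `x mod πB` to `π^k x`; its (corestriction to `π^k B`)
is the inverse of the canonical isomorphism `χ : π^k B → L̄`. -/
noncomputable def psi : Lbar R π k B →ₗ[Rmod R π (k + 1)] B :=
  Submodule.liftQ _ ((pbar R π k) ^ k • (LinearMap.id : B →ₗ[Rmod R π (k + 1)] B))
    (by
      intro x hx
      rw [← SetLike.mem_coe, Submodule.coe_pointwise_smul, Set.mem_smul_set] at hx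
      obtain ⟨y, -, rfl⟩ := hx
      have h0 : (pbar R π k) ^ k * pbar R π k = 0 := by
        rw [← pow_succ, ← map_pow, Ideal.Quotient.eq_zero_iff_mem]
        exact Ideal.mem_span_singleton_self _
      simp only [LinearMap.mem_ker, LinearMap.smul_apply, LinearMap.id_apply, smul_smul]
      rw [h0, zero_smul])

@[simp] theorem psi_apply (x : B) :
    psi R π k B (lam R π k B x) = ((pbar R π k) ^ k) • x := rfl

end Setup

theorem Module.Free.exists_eq_smul_of_smul_eq_zero {S M : Type*} [CommRing S] [AddCommGroup M]
    [Module S M] [Module.Free S M] {a c : S} (hac : ∀ r, a * r = 0 → c ∣ r) {m : M}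
    (hm : a • m = 0) : ∃ w, m = c • w := by
  let b := Module.Free.chooseBasis S M
  have hdvd : ∀ i, c ∣ b.repr m i := fun i ↦ hac _ <| by
    simpa only [map_smul, Finsupp.smul_apply, smul_eq_mul, map_zero, Finsupp.coe_zero,
      Pi.zero_apply] using congrArg (b.repr · i) hm
  choose s hs using hdvd
  refine ⟨∑ i ∈ (b.repr m).support, s i • b i, ?_⟩
  conv_lhs => rw [← b.linearCombination_repr m, Finsupp.linearCombination_apply, Finsupp.sum]
  simp only [Finset.smul_sum, hs, mul_smul]

namespace LinearMap

variable {S B : Type*} [CommRing S] [AddCommGroup B] [Module S B]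

def jacobiator (β : B →ₗ[S] B →ₗ[S] B) (x y z : B) : B :=
  β (β x y) z + β (β y z) x + β (β z x) y

def ceDifferential₂ (β φ : B →ₗ[S] B →ₗ[S] B) (x y z : B) : B :=
  β x (φ y z) - β y (φ x z) + β z (φ x y) - φ (β x y) z + φ (β x z) y - φ (β y z) x

theorem jacobiator_sub_jacobiator {β γ : B →ₗ[S] B →ₗ[S] B} (hβ : β.IsAlt) (hγ : γ.IsAlt)
    (hsq : ∀ u v w, (γ - β) ((γ - β) u v) w = 0) (x y z : B) :
    β.jacobiator x y z - γ.jacobiator x y z = β.ceDifferential₂ (γ - β) x y z := by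
  obtain ⟨δ, rfl⟩ : ∃ δ, γ = β + δ := ⟨γ - β, by abel⟩
  simp only [add_sub_cancel_left] at hsq ⊢
  have hδ : δ.IsAlt := fun v ↦ by
    simpa only [add_apply, hβ.self_eq_zero v, zero_add] using hγ.self_eq_zero v
  simp only [jacobiator, ceDifferential₂, add_apply, map_add, hsq]
  rw [← hδ.neg x z, ← hβ.neg x z, ← hβ.neg (δ x y), ← hβ.neg (δ y z), ← hβ.neg (δ x z)]
  simp only [map_neg, neg_apply]
  abel

end LinearMap

section Lift

variable {R : Type} [CommRing R] {π : R} {k : ℕ}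
variable {B : Type} [AddCommGroup B] [Module (Rmod R π (k + 1)) B]

theorem pbar_pow_succ_eq_zero : pbar R π k ^ (k + 1) = 0 := by
  rw [← map_pow, Ideal.Quotient.eq_zero_iff_mem]
  exact Ideal.mem_span_singleton_self _

theorem pbar_dvd_of_pbar_pow_mul_eq_zero [IsDomain R] (hπ : π ≠ 0) {r : Rmod R π (k + 1)}
    (h : pbar R π k ^ k * r = 0) : pbar R π k ∣ r := by
  obtain ⟨r, rfl⟩ := Ideal.Quotient.mk_surjective r
  rw [← map_pow, ← map_mul, Ideal.Quotient.eq_zero_iff_mem, Ideal.mem_span_singleton] at h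
  obtain ⟨a, ha⟩ := h
  refine ⟨Ideal.Quotient.mk _ a, congrArg _ (mul_left_cancel₀ (pow_ne_zero k hπ) ?_)⟩
  rw [ha, pow_succ, mul_assoc]

theorem psi_injective [IsDomain R] (hπ : π ≠ 0) [Module.Free (Rmod R π (k + 1)) B] :
    Function.Injective (psi R π k B) := by
  rw [← LinearMap.ker_eq_bot, LinearMap.ker_eq_bot']
  intro m hm
  obtain ⟨b, rfl⟩ := Submodule.mkQ_surjective _ m
  obtain ⟨w, rfl⟩ := Module.Free.exists_eq_smul_of_smul_eq_zero
    (fun _ ↦ pbar_dvd_of_pbar_pow_mul_eq_zero hπ) hm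
  exact (Submodule.Quotient.mk_eq_zero _).2 (Submodule.smul_mem_pointwise_smul _ _ _ trivial)

theorem mem_range_psi_of_mem_pikB {x : B} (hx : x ∈ pikB R π k B) :
    x ∈ LinearMap.range (psi R π k B) := by
  obtain ⟨w, -, rfl⟩ := (Submodule.mem_smul_pointwise_iff_exists _ _ _).1 hx
  exact ⟨lam R π k B w, rfl⟩

theorem pbar_smul_eq_zero_of_mem_pikB {x : B} (hx : x ∈ pikB R π k B) : pbar R π k • x = 0 := by
  obtain ⟨w, -, rfl⟩ := (Submodule.mem_smul_pointwise_iff_exists _ _ _).1 hx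
  rw [smul_smul, ← pow_succ', pbar_pow_succ_eq_zero, zero_smul]

theorem pbar_pow_smul_eq_zero_of_mem_pikB (hk : 1 ≤ k) {x : B} (hx : x ∈ pikB R π k B) :
    pbar R π k ^ k • x = 0 := by
  rw [← pow_sub_mul_pow _ hk, pow_one, mul_smul, pbar_smul_eq_zero_of_mem_pikB hx, smul_zero]

theorem apply_apply_eq_zero_of_mem_pikB (hk : 1 ≤ k)
    {D : B →ₗ[Rmod R π (k + 1)] B →ₗ[Rmod R π (k + 1)] B} (hD : ∀ x y, D x y ∈ pikB R π k B)
    (u v w : B) : D (D u v) w = 0 := by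
  obtain ⟨e, -, he⟩ := (Submodule.mem_smul_pointwise_iff_exists _ _ _).1 (hD u v)
  rw [← he, map_smul, LinearMap.smul_apply, pbar_pow_smul_eq_zero_of_mem_pikB hk (hD e w)]

section Reduction

variable {β : B →ₗ[Rmod R π (k + 1)] B →ₗ[Rmod R π (k + 1)] B}
  {βbar : Lbar R π k B →ₗ[Rmod R π (k + 1)] Lbar R π k B →ₗ[Rmod R π (k + 1)] Lbar R π k B}

theorem psi_lam_apply (hβ : ∀ x y, lam R π k B (β x y) = βbar (lam R π k B x) (lam R π k B y))
    (x : B) (v : Lbar R π k B) : psi R π k B (βbar (lam R π k B x) v) = β x (psi R π k B v) := by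
  obtain ⟨y, rfl⟩ := Submodule.mkQ_surjective _ v
  rw [← hβ, psi_apply, psi_apply, map_smul]

theorem psi_ceDifferential₂_lam
    (hβ : ∀ x y, lam R π k B (β x y) = βbar (lam R π k B x) (lam R π k B y))
    {D : B →ₗ[Rmod R π (k + 1)] B →ₗ[Rmod R π (k + 1)] B}
    {F : Lbar R π k B →ₗ[Rmod R π (k + 1)] Lbar R π k B →ₗ[Rmod R π (k + 1)] Lbar R π k B}
    (hF : ∀ x y, psi R π k B (F (lam R π k B x) (lam R π k B y)) = D x y) (x y z : B) :
    psi R π k B (βbar.ceDifferential₂ F (lam R π k B x) (lam R π k B y) (lam R π k B z)) =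
      β.ceDifferential₂ D x y z := by
  simp only [LinearMap.ceDifferential₂, map_sub, map_add, ← hβ, psi_lam_apply hβ, hF]

end Reduction

theorem exists_psi_lam_lam_eq [IsDomain R] (hπ : π ≠ 0) [Module.Free (Rmod R π (k + 1)) B]
    (D : B →ₗ[Rmod R π (k + 1)] B →ₗ[Rmod R π (k + 1)] B)
    (hD : ∀ x y, D x y ∈ pikB R π k B) :
    ∃ F : Lbar R π k B →ₗ[Rmod R π (k + 1)] Lbar R π k B →ₗ[Rmod R π (k + 1)] Lbar R π k B,
      ∀ x y, psi R π k B (F (lam R π k B x) (lam R π k B y)) = D x y := by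
  let G := D.codRestrict₂ _ (psi_injective hπ) fun x y ↦ mem_range_psi_of_mem_pikB (hD x y)
  have hG : ∀ x y, psi R π k B (G x y) = D x y := D.codRestrict₂_apply _ _ _
  have hleft : piB R π k B ≤ LinearMap.ker G := fun x hx ↦ by
    obtain ⟨w, -, rfl⟩ := (Submodule.mem_smul_pointwise_iff_exists _ _ _).1 hx
    refine LinearMap.mem_ker.2 (LinearMap.ext fun y ↦ psi_injective hπ ?_)
    rw [hG, LinearMap.zero_apply, map_zero, map_smul, LinearMap.smul_apply,
      pbar_smul_eq_zero_of_mem_pikB (hD w y)]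
  have hright : piB R π k B ≤ LinearMap.ker G.flip := fun y hy ↦ by
    obtain ⟨w, -, rfl⟩ := (Submodule.mem_smul_pointwise_iff_exists _ _ _).1 hy
    refine LinearMap.mem_ker.2 (LinearMap.ext fun x ↦ psi_injective hπ ?_)
    rw [LinearMap.flip_apply, hG, LinearMap.zero_apply, map_zero, map_smul,
      pbar_smul_eq_zero_of_mem_pikB (hD x w)]
  exact ⟨G.liftQ₂ _ _ hleft hright, hG⟩

end Lift

theorem stmt_8_general (R : Type) [CommRing R] [IsDomain R]
    (π : R) (hπ : Irreducible π) (k : ℕ) (hk : 1 ≤ k)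
    (B : Type) [AddCommGroup B] [Module (Rmod R π (k + 1)) B]
    [Module.Free (Rmod R π (k + 1)) B]
    (brL : Lred R π k B →ₗ[Rmod R π (k + 1)] Lred R π k B →ₗ[Rmod R π (k + 1)] Lred R π k B)
    (br1 br2 : B →ₗ[Rmod R π (k + 1)] B →ₗ[Rmod R π (k + 1)] B)
    (halt1 : ∀ v, br1 v v = 0) (halt2 : ∀ v, br2 v v = 0)
    (hlift1 : ∀ x y : B, modk R π k B (br1 x y) = brL (modk R π k B x) (modk R π k B y))
    (hlift2 : ∀ x y : B, modk R π k B (br2 x y) = brL (modk R π k B x) (modk R π k B y))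
    (brb : Lbar R π k B →ₗ[Rmod R π (k + 1)] Lbar R π k B →ₗ[Rmod R π (k + 1)] Lbar R π k B)
    (hbrb : ∀ x y : B, lam R π k B (br1 x y) = brb (lam R π k B x) (lam R π k B y))
    (J1 J2 : Lbar R π k B →ₗ[Rmod R π (k + 1)] Lbar R π k B →ₗ[Rmod R π (k + 1)]
      Lbar R π k B →ₗ[Rmod R π (k + 1)] Lbar R π k B)
    (hJ1 : ∀ x y z : B, psi R π k B (J1 (lam R π k B x) (lam R π k B y) (lam R π k B z)) =
      br1 (br1 x y) z + br1 (br1 y z) x + br1 (br1 z x) y)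
    (hJ2 : ∀ x y z : B, psi R π k B (J2 (lam R π k B x) (lam R π k B y) (lam R π k B z)) =
      br2 (br2 x y) z + br2 (br2 y z) x + br2 (br2 z x) y)
    :
    ∃ form : Lbar R π k B →ₗ[Rmod R π (k + 1)] Lbar R π k B →ₗ[Rmod R π (k + 1)] Lbar R π k B,
      (∀ v, form v v = 0) ∧
      ∀ x y z : Lbar R π k B,
        J1 x y z - J2 x y z =
          brb x (form y z) - brb y (form x z) + brb z (form x y)
            - form (brb x y) z + form (brb x z) y - form (brb y z) x := by
  have hψ : Function.Injective (psi R π k B) := psi_injective hπ.ne_zero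
  have hD : ∀ x y, (br2 - br1) x y ∈ pikB R π k B := fun x y ↦
    (Submodule.Quotient.eq _).1 ((hlift2 x y).trans (hlift1 x y).symm)
  obtain ⟨form, hform⟩ := exists_psi_lam_lam_eq hπ.ne_zero _ hD
  refine ⟨form, fun v ↦ ?_, fun x y z ↦ ?_⟩
  · obtain ⟨x, rfl⟩ := Submodule.mkQ_surjective _ v
    apply hψ
    rw [hform, map_zero, LinearMap.sub_apply, LinearMap.sub_apply, halt1, halt2, sub_self]
  · obtain ⟨a, rfl⟩ := Submodule.mkQ_surjective _ x
    obtain ⟨b, rfl⟩ := Submodule.mkQ_surjective _ y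
    obtain ⟨c, rfl⟩ := Submodule.mkQ_surjective _ z
    apply hψ
    change _ = psi R π k B (brb.ceDifferential₂ form _ _ _)
    rw [map_sub, hJ1, hJ2, psi_ceDifferential₂_lam hbrb hform]
    exact LinearMap.jacobiator_sub_jacobiator halt1 halt2
      (apply_apply_eq_zero_of_mem_pikB hk hD) a b c

/-- The cohomology class `[J] ∈ H³(L̄, ad)` of the Jacobiator of a bracket
algebra lift of the Lie algebra `L` over `R_{k+1}` does not depend on the choice of
bracket algebra lift: the 3-cocycles induced by any two lifts differ by the
Chevalley–Eilenberg coboundary of an alternating 2-form on `L̄`. -/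
theorem stmt_8 (R : Type) [CommRing R] [IsDomain R] [IsDiscreteValuationRing R]
    (π : R) (hπ : Irreducible π) (k : ℕ) (hk : 1 ≤ k)
    (B : Type) [AddCommGroup B] [Module (Rmod R π (k + 1)) B]
    [Module.Free (Rmod R π (k + 1)) B] [Module.Finite (Rmod R π (k + 1)) B]
    (brL : Lred R π k B →ₗ[Rmod R π (k + 1)] Lred R π k B →ₗ[Rmod R π (k + 1)] Lred R π k B)
    (hjacL : ∀ x y z : Lred R π k B, brL (brL x y) z + brL (brL y z) x + brL (brL z x) y = 0)
    (br1 br2 : B →ₗ[Rmod R π (k + 1)] B →ₗ[Rmod R π (k + 1)] B)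
    (halt1 : ∀ v, br1 v v = 0) (halt2 : ∀ v, br2 v v = 0)
    (hlift1 : ∀ x y : B, modk R π k B (br1 x y) = brL (modk R π k B x) (modk R π k B y))
    (hlift2 : ∀ x y : B, modk R π k B (br2 x y) = brL (modk R π k B x) (modk R π k B y))
    (brb : Lbar R π k B →ₗ[Rmod R π (k + 1)] Lbar R π k B →ₗ[Rmod R π (k + 1)] Lbar R π k B)
    (hbrb : ∀ x y : B, lam R π k B (br1 x y) = brb (lam R π k B x) (lam R π k B y))
    (J1 J2 : Lbar R π k B →ₗ[Rmod R π (k + 1)] Lbar R π k B →ₗ[Rmod R π (k + 1)]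
      Lbar R π k B →ₗ[Rmod R π (k + 1)] Lbar R π k B)
    (hJ1 : ∀ x y z : B, psi R π k B (J1 (lam R π k B x) (lam R π k B y) (lam R π k B z)) =
      br1 (br1 x y) z + br1 (br1 y z) x + br1 (br1 z x) y)
    (hJ2 : ∀ x y z : B, psi R π k B (J2 (lam R π k B x) (lam R π k B y) (lam R π k B z)) =
      br2 (br2 x y) z + br2 (br2 y z) x + br2 (br2 z x) y)
    :
    ∃ form : Lbar R π k B →ₗ[Rmod R π (k + 1)] Lbar R π k B →ₗ[Rmod R π (k + 1)] Lbar R π k B,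
      (∀ v, form v v = 0) ∧
      ∀ x y z : Lbar R π k B,
        J1 x y z - J2 x y z =
          brb x (form y z) - brb y (form x z) + brb z (form x y)
            - form (brb x y) z + form (brb x z) y - form (brb y z) x :=
  stmt_8_general R π hπ k hk B brL br1 br2 halt1 halt2 hlift1 hlift2 brb hbrb J1 J2 hJ1 hJ2
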